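/- arXiv:1602.02915 — 2 statements merged into one kernel-verified Lean document; each statement's English description precedes it below -/
import Mathlib

section
/- Let f = h + g, where h : ℝ^n → ℝ is continuously differentiable with ∇h Lipschitz continuous with constant L > 0 and g : ℝ^n → (−∞,∞] is proper closed. Suppose inf f > −∞ and f is a KL function with exponent 1/2. Let {x^k} be generated by the proximal gradient method x^{k+1} ∈ Argmin_{x∈ℝ^n} { ⟨∇h(x^k), x − x^k⟩ + (1/(2γ_k))‖x − x^k‖² + g(x) }, where 0 < inf_k γ_k ≤ sup_k γ_k < 1/L, and suppose {x^k} is bounded. Then {x^k} converges to a stationary point x̄ of f (i.e., 0 ∈ ∂f(x̄)) locally linearly: there exist M > 0 and q ∈ (0,1) such that ‖x^k − x̄‖ ≤ M q^k for all large k. -/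
open Filter Topology Metric Set
open scoped RealInnerProductSpace

noncomputable section

variable {E : Type*} [NormedAddCommGroup E] [InnerProductSpace ℝ E]

/-- The effective domain of an extended-real-valued function. -/
def edomain (f : E → EReal) : Set E := {x | f x < ⊤}

/-- A proper function: never `⊥` and not identically `⊤`. -/
def ProperFn (f : E → EReal) : Prop := (∀ x, f x ≠ ⊥) ∧ ∃ x, f x < ⊤

/-- The regular (Fréchet) subdifferential. -/
def regSubdiff (f : E → EReal) (x : E) : Set E :=
  {v | f x < ⊤ ∧ ∀ ε : ℝ, 0 < ε →
    ∀ᶠ z in 𝓝 x, f x + ((⟪v, z - x⟫ - ε * ‖z - x‖ : ℝ) : EReal) ≤ f z}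

/-- The limiting (Mordukhovich) subdifferential. -/
def limSubdiff (f : E → EReal) (x : E) : Set E :=
  {v | f x < ⊤ ∧ ∃ (xs vs : ℕ → E),
    Tendsto xs atTop (𝓝 x) ∧ Tendsto (fun t => f (xs t)) atTop (𝓝 (f x)) ∧
    Tendsto vs atTop (𝓝 v) ∧ ∀ t, vs t ∈ regSubdiff f (xs t)}

/-- The domain of the limiting subdifferential. -/
def subdiffDom (f : E → EReal) : Set E := {x | (limSubdiff f x).Nonempty}

/-- `f` satisfies the KL property at `xbar` with exponent `α`. -/
def KLAt (f : E → EReal) (xbar : E) (α : ℝ) : Prop :=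
  ∃ c > (0:ℝ), ∃ ε > (0:ℝ), ∃ ν : EReal, 0 < ν ∧
    ∀ x : E, ‖x - xbar‖ ≤ ε → f xbar < f x → f x < f xbar + ν →
      ENNReal.ofReal (c * (f x - f xbar).toReal ^ α) ≤ EMetric.infEdist 0 (limSubdiff f x)

/-- `f` is a KL function with exponent `α`. -/
def IsKL (f : E → EReal) (α : ℝ) : Prop := ∀ x ∈ subdiffDom f, KLAt f x α

open Classical in
/-- Indicator function of a set. -/
def indic (C : Set E) : E → EReal := fun x => if x ∈ C then 0 else ⊤

/-- `w` is the proximal point of `P` at `z`. -/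
def IsProxPt (P : E → EReal) (z w : E) : Prop :=
  ∀ y : E, P w + ((1/2 * ‖w - z‖^2 : ℝ) : EReal) ≤ P y + ((1/2 * ‖y - z‖^2 : ℝ) : EReal)

/-- A polyhedral set: a finite intersection of closed half-spaces. -/
def IsPolyhedralSet {F : Type*} [AddCommGroup F] [Module ℝ F] (S : Set F) : Prop :=
  ∃ (k : ℕ) (φ : Fin k → (F →ₗ[ℝ] ℝ)) (b : Fin k → ℝ), S = {x | ∀ i, φ i x ≤ b i}

/-- A proper closed polyhedral function: proper, closed, with polyhedral epigraph. -/
def IsPolyhedralFn (P : E → EReal) : Prop :=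
  ProperFn P ∧ LowerSemicontinuous P ∧
    IsPolyhedralSet {p : E × ℝ | P p.1 ≤ (p.2 : EReal)}

/-- Convexity of an extended-real-valued function, via convexity of its epigraph. -/
def EConvex (f : E → EReal) : Prop := Convex ℝ {p : E × ℝ | f p.1 ≤ (p.2 : EReal)}

/-!
Write `F = h + g`. The prox-gradient inequality tested at `x_k`, combined with the descent lemma,
gives sufficient decrease `F(x_{k+1}) + δ ‖x_{k+1} - x_k‖² ≤ F(x_k)` with `δ = 1/(2γhi) - L/2 > 0`,
and its optimality condition exhibits a regular subgradient of `F` at `x_{k+1}` of norm at most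
`(L + 1/γlo) ‖x_{k+1} - x_k‖`. Boundedness provides a cluster point `x̄`; lower semicontinuity and
the prox-gradient inequality tested at `x̄` force `F(x_k) ↓ F(x̄)`, so the steps tend to zero and
`x̄` is stationary. Near `x̄` the KL inequality with exponent `1/2` turns the two estimates into a
contraction `r_{k+1} ≤ ρ r_k` of `r_k = F(x_k) - F(x̄)`. The steps are bounded by `√(r_k / δ)`,
hence geometrically summable, so once an iterate is close enough to `x̄` with `r_k` small, the
whole tail stays in the KL neighbourhood and converges R-linearly.
-/

open scoped NNReal

section LocalContraction

variable {X : Type*} [PseudoMetricSpace X] {x : ℕ → X} {r : ℕ → ℝ} {xbar : X} {δ σ ε : ℝ}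

lemma dist_le_sqrt_mul_pow (hδ : 0 < δ) (hσ0 : 0 ≤ σ) {a b : X} {s s₀ : ℝ} {i : ℕ}
    (hab : δ * dist a b ^ 2 ≤ s) (hs : s ≤ (σ ^ 2) ^ i * s₀) : dist a b ≤ √(s₀ / δ) * σ ^ i :=
  calc dist a b ≤ √(s / δ) := Real.le_sqrt_of_sq_le ((le_div_iff₀' hδ).2 hab)
    _ ≤ √((σ ^ i) ^ 2 * (s₀ / δ)) := by
        rw [← pow_mul, mul_comm i, pow_mul, ← mul_div_assoc]
        gcongr
    _ = √(s₀ / δ) * σ ^ i := by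
        rw [Real.sqrt_mul (sq_nonneg _), Real.sqrt_sq (pow_nonneg hσ0 i), mul_comm]

lemma le_pow_mul_of_local_contraction {N : ℕ} (hδ : 0 < δ) (hσ0 : 0 ≤ σ) (hσ1 : σ < 1)
    (hstep : ∀ k ≥ N, δ * dist (x k) (x (k + 1)) ^ 2 ≤ r k)
    (hcontr : ∀ k ≥ N, dist (x (k + 1)) xbar ≤ ε → r (k + 1) ≤ σ ^ 2 * r k)
    (hstart : dist (x N) xbar + √(r N / δ) / (1 - σ) ≤ ε) (m : ℕ) :
    r (m + N) ≤ (σ ^ 2) ^ m * r N := by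
  induction m using Nat.strong_induction_on with
  | _ m ih =>
  cases m with
  | zero => simp
  | succ m =>
    have hjump : ∀ i ≤ m, dist (x (i + N)) (x (i + 1 + N)) ≤ √(r N / δ) * σ ^ i := by
      intro i hi
      rw [add_right_comm]
      exact dist_le_sqrt_mul_pow hδ hσ0 (hstep _ (Nat.le_add_left N i)) (ih i (by omega))
    have hball : dist (x (m + N + 1)) xbar ≤ ε := by
      calc dist (x (m + N + 1)) xbar ≤ dist (x (m + 1 + N)) (x N) + dist (x N) xbar := by
            rw [add_right_comm]
            exact dist_triangle _ _ _
        _ ≤ ∑ i ∈ Finset.range (m + 1), √(r N / δ) * σ ^ i + dist (x N) xbar := by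
            rw [dist_comm]
            gcongr
            simpa using (dist_le_range_sum_dist (fun i => x (i + N)) (m + 1)).trans
              (Finset.sum_le_sum fun i hi => hjump i (Nat.lt_succ_iff.1 (Finset.mem_range.1 hi)))
        _ ≤ √(r N / δ) / (1 - σ) + dist (x N) xbar := by
            rw [← Finset.mul_sum, div_eq_mul_inv (√(r N / δ))]
            gcongr
            simpa using geom_sum_Ico_le_of_lt_one (m := 0) hσ0 hσ1
        _ ≤ ε := by linarith
    calc r (m + 1 + N) = r (m + N + 1) := by rw [add_right_comm]
      _ ≤ σ ^ 2 * r (m + N) := hcontr _ (Nat.le_add_left N m) hball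
      _ ≤ σ ^ 2 * ((σ ^ 2) ^ m * r N) := by gcongr; exact ih m (by omega)
      _ = (σ ^ 2) ^ (m + 1) * r N := by ring

theorem tendsto_and_dist_le_geometric_of_local_contraction (hδ : 0 < δ) (hσ0 : 0 < σ)
    (hσ1 : σ < 1) (hε : 0 < ε) (hstep : ∀ k, δ * dist (x k) (x (k + 1)) ^ 2 ≤ r k)
    (hcontr : ∀ᶠ k in atTop, dist (x (k + 1)) xbar ≤ ε → r (k + 1) ≤ σ ^ 2 * r k)
    (hr : Tendsto r atTop (𝓝 0)) (hx : MapClusterPt xbar atTop x) :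
    Tendsto x atTop (𝓝 xbar) ∧ ∃ M > 0, ∀ᶠ k in atTop, dist (x k) xbar ≤ M * σ ^ k := by
  obtain ⟨N₀, hN₀⟩ := eventually_atTop.1 hcontr
  have hsmall : ∀ᶠ k in atTop, N₀ ≤ k ∧ √(r k / δ) / (1 - σ) < ε / 2 := by
    refine (eventually_ge_atTop N₀).and ?_
    have : Tendsto (fun k => √(r k / δ) / (1 - σ)) atTop (𝓝 0) := by
      simpa using ((hr.div_const δ).sqrt).div_const (1 - σ)
    exact this.eventually (gt_mem_nhds (half_pos hε))
  obtain ⟨N, ⟨hN, hrN⟩, hxN⟩ :=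
    (hsmall.and_frequently (hx.frequently (closedBall_mem_nhds xbar (half_pos hε)))).exists
  set C := √(r N / δ)
  have htrap := le_pow_mul_of_local_contraction (x := x) hδ hσ0.le hσ1 (N := N)
    (fun k _ => hstep k) (fun k hk => hN₀ k (hN.trans hk))
    (by linarith)
  have hgeom : ∀ m, dist (x (m + N)) (x (m + 1 + N)) ≤ C * σ ^ m := fun m => by
    rw [add_right_comm]; exact dist_le_sqrt_mul_pow hδ hσ0.le (hstep _) (htrap m)
  have hlim : Tendsto x atTop (𝓝 xbar) :=
    le_nhds_of_cauchy_adhp ((cauchySeq_shift N).1 (cauchySeq_of_le_geometric σ C hσ1 hgeom)) hx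
  refine ⟨hlim, C / (1 - σ) / σ ^ N + 1, by positivity, ?_⟩
  filter_upwards [eventually_ge_atTop N] with k hk
  obtain ⟨m, rfl⟩ := Nat.exists_eq_add_of_le' hk
  calc dist (x (m + N)) xbar ≤ C * σ ^ m / (1 - σ) :=
        dist_le_of_le_geometric_of_tendsto σ C hσ1 hgeom ((tendsto_add_atTop_iff_nat N).2 hlim) m
    _ = C / (1 - σ) / σ ^ N * σ ^ (m + N) := by
        rw [pow_add]; field_simp
    _ ≤ (C / (1 - σ) / σ ^ N + 1) * σ ^ (m + N) := by gcongr; linarith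

end LocalContraction

lemma eventually_le_geometric_of_succ {u : ℕ → ℝ} {M q : ℝ} (hq : 0 < q)
    (h : ∀ᶠ k in atTop, u (k + 1) ≤ M * q ^ k) : ∀ᶠ k in atTop, u k ≤ M / q * q ^ k := by
  obtain ⟨N, hN⟩ := eventually_atTop.1 h
  filter_upwards [eventually_gt_atTop N] with k hk
  obtain ⟨k, rfl⟩ : ∃ j, k = j + 1 := ⟨k - 1, by omega⟩
  calc u (k + 1) ≤ M * q ^ k := hN k (by omega)
    _ = M / q * q ^ (k + 1) := by field_simp; ring

section SufficientDecrease

variable {F : Type*} [SeminormedAddCommGroup F] {x : ℕ → F} {φ : ℕ → ℝ} {δ ℓ : ℝ}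

lemma antitone_of_sufficient_decrease (hδ : 0 ≤ δ)
    (hdecr : ∀ k, φ (k + 1) + δ * ‖x (k + 1) - x k‖ ^ 2 ≤ φ k) : Antitone φ :=
  antitone_nat_of_succ_le fun k => by nlinarith [hdecr k, sq_nonneg ‖x (k + 1) - x k‖]

lemma tendsto_sub_of_sufficient_decrease (hδ : 0 < δ)
    (hdecr : ∀ k, φ (k + 1) + δ * ‖x (k + 1) - x k‖ ^ 2 ≤ φ k) (hφ : Tendsto φ atTop (𝓝 ℓ)) :
    Tendsto (fun k => x (k + 1) - x k) atTop (𝓝 0) := by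
  rw [tendsto_zero_iff_norm_tendsto_zero]
  refine squeeze_zero (g := fun k => √((φ k - φ (k + 1)) / δ)) (fun _ => norm_nonneg _)
    (fun k => Real.le_sqrt_of_sq_le ((le_div_iff₀' hδ).2 (by linarith [hdecr k]))) ?_
  simpa using ((hφ.sub (hφ.comp (tendsto_add_atTop_nat 1))).div_const δ).sqrt

end SufficientDecrease

lemma exists_tendsto_of_antitone_of_lowerSemicontinuousAt {X : Type*} [TopologicalSpace X]
    {f : X → EReal} {x : ℕ → X} {φ : ℕ → ℝ} {xbar : X} {ψ : ℕ → ℕ}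
    (hφ : ∀ k, f (x k) = φ k) (hanti : Antitone φ) (hf : LowerSemicontinuousAt f xbar)
    (hbot : f xbar ≠ ⊥) (hψ : Tendsto ψ atTop atTop) (hxψ : Tendsto (x ∘ ψ) atTop (𝓝 xbar)) :
    ∃ ℓ : ℝ, Tendsto φ atTop (𝓝 ℓ) ∧ f xbar ≤ ℓ := by
  have hlim : Tendsto (fun k => (φ k : EReal)) atTop (𝓝 (⨅ k, (φ k : EReal))) :=
    tendsto_atTop_iInf fun a b hab => EReal.coe_le_coe_iff.2 (hanti hab)
  -- The limit exists in `EReal` without any lower bound; lower semicontinuity makes it finite.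
  have hle : f xbar ≤ ⨅ k, (φ k : EReal) :=
    calc f xbar ≤ liminf f (𝓝 xbar) := hf.le_liminf
      _ ≤ liminf (f ∘ x ∘ ψ) atTop := hxψ.liminf_le_liminf_comp
      _ = ⨅ k, (φ k : EReal) := by
          simpa only [Function.comp_def, hφ] using (hlim.comp hψ).liminf_eq
  have htop : ⨅ k, (φ k : EReal) ≠ ⊤ := ne_top_of_le_ne_top (EReal.coe_ne_top (φ 0)) (iInf_le _ 0)
  have hcoe := EReal.coe_toReal htop (ne_bot_of_le_ne_bot hbot hle)
  exact ⟨_, EReal.tendsto_coe.1 (hcoe ▸ hlim), hcoe ▸ hle⟩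

lemma regSubdiff_subset_limSubdiff (f : E → EReal) (x : E) : regSubdiff f x ⊆ limSubdiff f x :=
  fun v hv => ⟨hv.1, fun _ => x, fun _ => v, tendsto_const_nhds, tendsto_const_nhds,
    tendsto_const_nhds, fun _ => hv⟩

lemma KLAt.exists_mul_rpow_le_norm {f : E → EReal} {xbar : E} {α : ℝ} (h : KLAt f xbar α) :
    ∃ c > 0, ∃ ε > 0, ∃ ν > (0 : ℝ), ∀ z, ‖z - xbar‖ ≤ ε → f xbar < f z → f z < f xbar + ν →
      ∀ v ∈ regSubdiff f z, c * (f z - f xbar).toReal ^ α ≤ ‖v‖ := by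
  obtain ⟨c, hc, ε, hε, ν, hν, hKL⟩ := h
  obtain ⟨t, ht, htν⟩ := EReal.lt_iff_exists_real_btwn.1 hν
  refine ⟨c, hc, ε, hε, t, EReal.coe_pos.1 ht, fun z hz hlo hhi v hv => ?_⟩
  have hdist := (hKL z hz hlo (hhi.trans_le (add_le_add le_rfl htν.le))).trans
    (Metric.infEDist_le_edist_of_mem (regSubdiff_subset_limSubdiff f z hv))
  rwa [edist_dist, dist_zero_left, ENNReal.ofReal_le_ofReal_iff (norm_nonneg v)] at hdist

lemma mem_regSubdiff_of_forall_le {g : E → EReal} {w v : E} {C : ℝ} (hw : g w < ⊤)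
    (hle : ∀ z, g w + ((⟪v, z - w⟫ - C * ‖z - w‖ ^ 2 : ℝ) : EReal) ≤ g z) :
    v ∈ regSubdiff g w := by
  refine ⟨hw, fun ε hε => ?_⟩
  filter_upwards [closedBall_mem_nhds w (div_pos hε (by positivity : (0 : ℝ) < |C| + 1))]
    with z hz
  rw [mem_closedBall, dist_eq_norm, le_div_iff₀ (by positivity)] at hz
  refine le_trans (add_le_add le_rfl (EReal.coe_le_coe_iff.2 ?_)) (hle z)
  have hC : C * ‖z - w‖ ≤ ε := by nlinarith [le_abs_self C, norm_nonneg (z - w), abs_nonneg C]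
  nlinarith [norm_nonneg (z - w)]

lemma add_mem_regSubdiff_of_hasGradientAt [CompleteSpace E] {h : E → ℝ} {g : E → EReal}
    {a v w : E} (hh : HasGradientAt h a w) (hv : v ∈ regSubdiff g w) :
    a + v ∈ regSubdiff (fun z => (h z : EReal) + g z) w := by
  refine ⟨EReal.add_lt_top (EReal.coe_ne_top _) hv.1.ne, fun ε hε => ?_⟩
  have hlin := Asymptotics.isLittleO_iff.1 hh.hasFDerivAt.isLittleO (half_pos hε)
  filter_upwards [hlin, hv.2 (ε / 2) (half_pos hε)] with z hhz hgz
  have hhz' : h w + (⟪a, z - w⟫ - ε / 2 * ‖z - w‖) ≤ h z := by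
    simp only [InnerProductSpace.toDual_apply_apply, Real.norm_eq_abs] at hhz
    linarith [neg_abs_le (h z - h w - ⟪a, z - w⟫)]
  have hsplit : (⟪a + v, z - w⟫ - ε * ‖z - w‖ : ℝ) =
      (⟪a, z - w⟫ - ε / 2 * ‖z - w‖) + (⟪v, z - w⟫ - ε / 2 * ‖z - w‖) := by
    rw [inner_add_left]; ring
  calc (h w : EReal) + g w + ((⟪a + v, z - w⟫ - ε * ‖z - w‖ : ℝ) : EReal)
      = ((h w : EReal) + ((⟪a, z - w⟫ - ε / 2 * ‖z - w‖ : ℝ) : EReal)) +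
          (g w + ((⟪v, z - w⟫ - ε / 2 * ‖z - w‖ : ℝ) : EReal)) := by
        rw [hsplit, EReal.coe_add]
        abel
    _ ≤ h z + g z := add_le_add (by exact_mod_cast hhz') hgz

lemma lowerSemicontinuous_coe_add {X : Type*} [TopologicalSpace X] {h : X → ℝ} {g : X → EReal}
    (hh : Continuous h) (hg : LowerSemicontinuous g) :
    LowerSemicontinuous fun z => (h z : EReal) + g z :=
  (continuous_coe_real_ereal.comp hh).lowerSemicontinuous.add' hg fun _ =>
    EReal.continuousAt_add (Or.inl (EReal.coe_ne_top _)) (Or.inl (EReal.coe_ne_bot _))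

theorem le_add_inner_add_sq_of_lipschitzWith_gradient [CompleteSpace E] {h : E → ℝ} {h' : E → E}
    {K : ℝ≥0} (hgrad : ∀ x, HasGradientAt h (h' x) x) (hlip : LipschitzWith K h') (x y : E) :
    h y ≤ h x + ⟪h' x, y - x⟫ + K / 2 * ‖y - x‖ ^ 2 := by
  set d := y - x
  let ψ : ℝ → ℝ := fun t => h (x + t • d) - t * ⟪h' x, d⟫ - K / 2 * t ^ 2 * ‖d‖ ^ 2
  have hψ' : ∀ t, HasDerivAt ψ (⟪h' (x + t • d) - h' x, d⟫ - K * t * ‖d‖ ^ 2) t := by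
    intro t
    have hline : HasDerivAt (fun s : ℝ => x + s • d) d t := by
      simpa using ((hasDerivAt_id t).smul_const d).const_add x
    have hcomp : HasDerivAt (fun s => h (x + s • d)) ⟪h' (x + t • d), d⟫ t := by
      simpa [Function.comp_def] using (hgrad _).hasFDerivAt.comp_hasDerivAt t hline
    refine ((hcomp.sub ((hasDerivAt_id t).mul_const ⟪h' x, d⟫)).sub
      (((hasDerivAt_pow 2 t).const_mul (K / 2 : ℝ)).mul_const (‖d‖ ^ 2))).congr_deriv ?_
    simp only [inner_sub_left]
    ring
  have hanti : AntitoneOn ψ (Ici 0) := by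
    refine antitoneOn_of_hasDerivWithinAt_nonpos (convex_Ici 0)
      (fun t _ => (hψ' t).continuousAt.continuousWithinAt) (fun t _ => (hψ' t).hasDerivWithinAt)
      fun t ht => ?_
    rw [interior_Ici, mem_Ioi] at ht
    have hgrowth : ⟪h' (x + t • d) - h' x, d⟫ ≤ K * t * ‖d‖ ^ 2 :=
      calc ⟪h' (x + t • d) - h' x, d⟫ ≤ ‖h' (x + t • d) - h' x‖ * ‖d‖ := real_inner_le_norm _ _
        _ ≤ K * ‖t • d‖ * ‖d‖ := by
            gcongr
            simpa [dist_eq_norm] using hlip.dist_le_mul (x + t • d) x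
        _ = K * t * ‖d‖ ^ 2 := by rw [norm_smul, Real.norm_of_nonneg ht.le]; ring
    linarith
  have := hanti self_mem_Ici (mem_Ici.2 zero_le_one) zero_le_one
  simp [ψ, d] at this
  linarith

def IsProxGradStep (p : E) (g : E → EReal) (γ : ℝ) (u w : E) : Prop :=
  ∀ y, ((⟪p, w - u⟫ + 1 / (2 * γ) * ‖w - u‖ ^ 2 : ℝ) : EReal) + g w ≤
    ((⟪p, y - u⟫ + 1 / (2 * γ) * ‖y - u‖ ^ 2 : ℝ) : EReal) + g y

namespace IsProxGradStep

variable {p u w z : E} {g : E → EReal} {γ γmin : ℝ}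

lemma ne_top (hs : IsProxGradStep p g γ u w) (hz : g z ≠ ⊤) : g w ≠ ⊤ := fun hw => by
  have := hs z
  rw [hw, EReal.coe_add_top, top_le_iff] at this
  exact EReal.add_lt_top (EReal.coe_ne_top _) hz |>.ne this

lemma toReal_le (hs : IsProxGradStep p g γ u w) (hg : ∀ y, g y ≠ ⊥) (hz : g z ≠ ⊤) :
    ⟪p, w - u⟫ + 1 / (2 * γ) * ‖w - u‖ ^ 2 + (g w).toReal ≤
      ⟪p, z - u⟫ + 1 / (2 * γ) * ‖z - u‖ ^ 2 + (g z).toReal := by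
  have := hs z
  rwa [← EReal.coe_toReal (hs.ne_top hz) (hg w), ← EReal.coe_toReal hz (hg z), ← EReal.coe_add,
    ← EReal.coe_add, EReal.coe_le_coe_iff] at this

lemma toReal_le_add_inner_add_sq (hs : IsProxGradStep p g γ u w) (hg : ∀ y, g y ≠ ⊥)
    (hz : g z ≠ ⊤) (hγmin : 0 < γmin) (hγ : γmin ≤ γ) :
    (g w).toReal ≤ (g z).toReal + ⟪p, z - w⟫ + 1 / (2 * γmin) * ‖z - u‖ ^ 2 := by
  have hstep := hs.toReal_le hg hz
  have hinner : ⟪p, z - w⟫ = ⟪p, z - u⟫ - ⟪p, w - u⟫ := by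
    rw [← inner_sub_right, sub_sub_sub_cancel_right]
  have hcoef : 1 / (2 * γ) * ‖z - u‖ ^ 2 ≤ 1 / (2 * γmin) * ‖z - u‖ ^ 2 := by gcongr
  nlinarith [sq_nonneg ‖w - u‖, one_div_pos.2 (by linarith : 0 < 2 * γ)]

lemma neg_sub_smul_mem_regSubdiff (hs : IsProxGradStep p g γ u w) (hg : ∀ y, g y ≠ ⊥)
    (hw : g w ≠ ⊤) (hγ : 0 < γ) : -p - γ⁻¹ • (w - u) ∈ regSubdiff g w := by
  refine mem_regSubdiff_of_forall_le (C := 1 / (2 * γ)) hw.lt_top fun z => ?_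
  by_cases hz : g z = ⊤
  · rw [hz]; exact le_top
  rw [← EReal.coe_toReal hw (hg w), ← EReal.coe_toReal hz (hg z), ← EReal.coe_add,
    EReal.coe_le_coe_iff]
  have hstep := hs.toReal_le hg hz
  have hzu : z - u = (z - w) + (w - u) := by abel
  rw [hzu, norm_add_sq_real, inner_add_right] at hstep
  have hγinv : γ⁻¹ = 2 * (1 / (2 * γ)) := by field_simp
  rw [inner_sub_left, inner_neg_left, real_inner_smul_left, real_inner_comm (z - w) (w - u), hγinv]
  nlinarith

lemma add_sq_le [CompleteSpace E] {h : E → ℝ} {h' : E → E} {K : ℝ≥0} {γmax : ℝ}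
    (hs : IsProxGradStep (h' u) g γ u w) (hgrad : ∀ x, HasGradientAt h (h' x) x)
    (hlip : LipschitzWith K h') (hg : ∀ y, g y ≠ ⊥) (hu : g u ≠ ⊤) (hγ : 0 < γ)
    (hγmax : γ ≤ γmax) :
    h w + (g w).toReal + (1 / (2 * γmax) - K / 2) * ‖w - u‖ ^ 2 ≤ h u + (g u).toReal := by
  have hstep := hs.toReal_le hg hu
  rw [sub_self, inner_zero_right, norm_zero] at hstep
  have hdesc := le_add_inner_add_sq_of_lipschitzWith_gradient hgrad hlip u w
  have hcoef : 1 / (2 * γmax) * ‖w - u‖ ^ 2 ≤ 1 / (2 * γ) * ‖w - u‖ ^ 2 := by gcongr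
  nlinarith

lemma exists_mem_regSubdiff [CompleteSpace E] {h : E → ℝ} {h' : E → E} {K : ℝ≥0}
    (hs : IsProxGradStep (h' u) g γ u w) (hgrad : ∀ x, HasGradientAt h (h' x) x)
    (hlip : LipschitzWith K h') (hg : ∀ y, g y ≠ ⊥) (hw : g w ≠ ⊤) (hγmin : 0 < γmin)
    (hγ : γmin ≤ γ) :
    ∃ v ∈ regSubdiff (fun z => (h z : EReal) + g z) w, ‖v‖ ≤ (K + γmin⁻¹) * ‖w - u‖ := by
  have hγ0 := hγmin.trans_le hγ
  refine ⟨_, add_mem_regSubdiff_of_hasGradientAt (hgrad w)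
    (hs.neg_sub_smul_mem_regSubdiff hg hw hγ0), ?_⟩
  calc ‖h' w + (-h' u - γ⁻¹ • (w - u))‖ = ‖(h' w - h' u) - γ⁻¹ • (w - u)‖ := by
        congr 1; abel
    _ ≤ ‖h' w - h' u‖ + γ⁻¹ * ‖w - u‖ := by
        refine (norm_sub_le _ _).trans ?_
        rw [norm_smul, Real.norm_of_nonneg (inv_nonneg.2 hγ0.le)]
    _ ≤ K * ‖w - u‖ + γmin⁻¹ * ‖w - u‖ := by
        gcongr
        simpa [dist_eq_norm] using hlip.dist_le_mul w u
    _ = (K + γmin⁻¹) * ‖w - u‖ := by ring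

end IsProxGradStep

theorem coe_le_of_tendsto_of_isProxGradStep {h : E → ℝ} {h' : E → E} {g : E → EReal} {γ : ℕ → ℝ}
    {γmin ℓ : ℝ} {y : ℕ → E} {ψ : ℕ → ℕ} {xbar : E}
    (hs : ∀ k, IsProxGradStep (h' (y k)) g (γ k) (y k) (y (k + 1)))
    (hγmin : 0 < γmin) (hγ : ∀ k, γmin ≤ γ k) (hh : Continuous h) (hh' : Continuous h')
    (hg : ∀ z, g z ≠ ⊥) (hd : Tendsto (fun k => y (k + 1) - y k) atTop (𝓝 0))
    (hψ : Tendsto ψ atTop atTop) (hyψ : Tendsto (y ∘ ψ) atTop (𝓝 xbar))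
    (hφ : Tendsto (fun k => h (y k) + (g (y k)).toReal) atTop (𝓝 ℓ)) :
    (ℓ : EReal) ≤ h xbar + g xbar := by
  by_cases hx : g xbar = ⊤
  · rw [hx, EReal.coe_add_top]
    exact le_top
  rw [← EReal.coe_toReal hx (hg xbar), ← EReal.coe_add, EReal.coe_le_coe_iff]
  have hyψ₁ : Tendsto (fun j => y (ψ j + 1)) atTop (𝓝 xbar) := by
    simpa using hyψ.add (hd.comp hψ)
  refine le_of_tendsto_of_tendsto' (hφ.comp ((tendsto_add_atTop_nat 1).comp hψ))
    (g := fun j => h (y (ψ j + 1)) + ((g xbar).toReal + ⟪h' (y (ψ j)), xbar - y (ψ j + 1)⟫ +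
      1 / (2 * γmin) * ‖xbar - y (ψ j)‖ ^ 2)) ?_ fun j => ?_
  · have hu : Tendsto (fun j => xbar - y (ψ j + 1)) atTop (𝓝 0) := by
      simpa using (tendsto_const_nhds (x := xbar)).sub hyψ₁
    have hv : Tendsto (fun j => xbar - y (ψ j)) atTop (𝓝 0) := by
      simpa using (tendsto_const_nhds (x := xbar)).sub hyψ
    simpa using ((hh.tendsto xbar).comp hyψ₁).add
      (((((hh'.tendsto xbar).comp hyψ).inner hu).const_add (g xbar).toReal).add
        ((hv.norm.pow 2).const_mul (1 / (2 * γmin))))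
  · have := (hs (ψ j)).toReal_le_add_inner_add_sq hg hx hγmin (hγ _)
    simp only [Function.comp_apply]
    linarith

section KLConvergence

variable {f : E → EReal} {x : ℕ → E} {φ : ℕ → ℝ} {xbar : E} {δ K ℓ : ℝ} {ψ : ℕ → ℕ}

theorem zero_mem_limSubdiff_of_sufficient_decrease (hδ : 0 < δ) (hφ : ∀ k, f (x k) = φ k)
    (hdecr : ∀ k, φ (k + 1) + δ * ‖x (k + 1) - x k‖ ^ 2 ≤ φ k)
    (hsub : ∀ k, ∃ v ∈ regSubdiff f (x (k + 1)), ‖v‖ ≤ K * ‖x (k + 1) - x k‖)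
    (hφℓ : Tendsto φ atTop (𝓝 ℓ)) (hℓ : f xbar = ℓ)
    (hψ : Tendsto ψ atTop atTop) (hxψ : Tendsto (x ∘ ψ) atTop (𝓝 xbar)) :
    0 ∈ limSubdiff f xbar := by
  choose v hv hvK using hsub
  have hd := (tendsto_sub_of_sufficient_decrease hδ hdecr hφℓ).comp hψ
  have hψ₁ : Tendsto (fun j => ψ j + 1) atTop atTop := (tendsto_add_atTop_nat 1).comp hψ
  refine ⟨hℓ ▸ EReal.coe_lt_top ℓ, fun j => x (ψ j + 1), fun j => v (ψ j), ?_, ?_, ?_,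
    fun j => hv (ψ j)⟩
  · simpa using hxψ.add hd
  · simpa only [hφ, hℓ, Function.comp_def] using EReal.tendsto_coe.2 (hφℓ.comp hψ₁)
  · rw [tendsto_zero_iff_norm_tendsto_zero]
    refine squeeze_zero (fun _ => norm_nonneg _) (fun j => hvK (ψ j)) ?_
    simpa using (hd.norm).const_mul K

lemma le_mul_of_mul_sqrt_le {a b c d δ K : ℝ} (hc : 0 < c) (hδ : 0 < δ) (hK : 0 < K)
    (hb : 0 ≤ b) (hKL : c * √b ≤ K * d) (hdecr : δ * d ^ 2 ≤ a - b) :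
    b ≤ (K / √(K ^ 2 + c ^ 2 * δ)) ^ 2 * a := by
  have hsq : c ^ 2 * b ≤ K ^ 2 * d ^ 2 := by
    have := pow_le_pow_left₀ (by positivity) hKL 2
    rwa [mul_pow, mul_pow, Real.sq_sqrt hb] at this
  rw [div_pow, Real.sq_sqrt (by positivity), div_mul_eq_mul_div, le_div_iff₀ (by positivity)]
  nlinarith

theorem tendsto_and_le_geometric_of_KLAt_half (hδ : 0 < δ) (hK : 0 < K) (hφ : ∀ k, f (x k) = φ k)
    (hdecr : ∀ k, φ (k + 1) + δ * ‖x (k + 1) - x k‖ ^ 2 ≤ φ k)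
    (hsub : ∀ k, ∃ v ∈ regSubdiff f (x (k + 1)), ‖v‖ ≤ K * ‖x (k + 1) - x k‖)
    (hφℓ : Tendsto φ atTop (𝓝 ℓ)) (hℓ : f xbar = ℓ)
    (hψ : Tendsto ψ atTop atTop) (hxψ : Tendsto (x ∘ ψ) atTop (𝓝 xbar))
    (hKL : KLAt f xbar (1 / 2)) :
    Tendsto x atTop (𝓝 xbar) ∧
      ∃ M > (0 : ℝ), ∃ q : ℝ, 0 < q ∧ q < 1 ∧ ∀ᶠ k in atTop, ‖x k - xbar‖ ≤ M * q ^ k := by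
  obtain ⟨c, hc, ε, hε, ν, hν, hKL⟩ := hKL.exists_mul_rpow_le_norm
  choose v hv hvK using hsub
  have hℓφ : ∀ k, ℓ ≤ φ k := (antitone_of_sufficient_decrease hδ.le hdecr).le_of_tendsto hφℓ
  set σ := K / √(K ^ 2 + c ^ 2 * δ)
  have hσ1 : σ < 1 := by
    rw [div_lt_one (by positivity), Real.lt_sqrt hK.le]
    nlinarith [mul_pos (pow_pos hc 2) hδ]
  have hcontr : ∀ᶠ k in atTop, dist (x (k + 1)) xbar ≤ ε →
      φ (k + 1) - ℓ ≤ σ ^ 2 * (φ k - ℓ) := by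
    filter_upwards [(hφℓ.comp (tendsto_add_atTop_nat 1)).eventually (gt_mem_nhds
      (lt_add_of_pos_right ℓ hν))] with k hνk hball
    rcases (hℓφ (k + 1)).eq_or_lt with heq | hlt
    · rw [← heq, sub_self]
      exact mul_nonneg (sq_nonneg σ) (sub_nonneg.2 (hℓφ k))
    have hval : (f (x (k + 1)) - f xbar).toReal = φ (k + 1) - ℓ := by
      rw [hφ, hℓ, ← EReal.coe_sub, EReal.toReal_coe]
    have hKLk := hKL (x (k + 1)) (by rwa [← dist_eq_norm])
      (by rw [hφ, hℓ]; exact EReal.coe_lt_coe_iff.2 hlt)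
      (by rw [hφ, hℓ, ← EReal.coe_add]; exact EReal.coe_lt_coe_iff.2 hνk) (v k) (hv k)
    rw [hval, ← Real.sqrt_eq_rpow] at hKLk
    exact le_mul_of_mul_sqrt_le hc hδ hK (sub_nonneg.2 (hℓφ _)) (hKLk.trans (hvK k))
      (by linarith [hdecr k])
  have hstep : ∀ k, δ * dist (x k) (x (k + 1)) ^ 2 ≤ φ k - ℓ := fun k => by
    rw [dist_comm, dist_eq_norm]
    linarith [hdecr k, hℓφ (k + 1)]
  obtain ⟨hlim, M, hM, hbound⟩ := tendsto_and_dist_le_geometric_of_local_contraction hδ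
    (by positivity) hσ1 hε hstep hcontr (by simpa using hφℓ.sub_const ℓ) (hxψ.mapClusterPt.of_comp hψ)
  exact ⟨hlim, M, hM, σ, by positivity, hσ1, by simpa only [dist_eq_norm] using hbound⟩

end KLConvergence

theorem stmt_17_general {n : ℕ} (h : EuclideanSpace ℝ (Fin n) → ℝ)
    (h' : EuclideanSpace ℝ (Fin n) → EuclideanSpace ℝ (Fin n))
    (hgrad : ∀ x, HasGradientAt h (h' x) x)
    (L : ℝ) (hL : 0 < L) (hlip : LipschitzWith (Real.toNNReal L) h')
    (g : EuclideanSpace ℝ (Fin n) → EReal)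
    (hgproper : ProperFn g) (hgclosed : LowerSemicontinuous g)
    (f : EuclideanSpace ℝ (Fin n) → EReal) (hf : ∀ x, f x = ((h x : ℝ) : EReal) + g x)
    (hKL : IsKL f (1/2))
    (γ : ℕ → ℝ) (γlo γhi : ℝ) (hγlo : 0 < γlo) (hγhi : γhi < 1/L)
    (hγ : ∀ k, γlo ≤ γ k ∧ γ k ≤ γhi)
    (x : ℕ → EuclideanSpace ℝ (Fin n))
    (hiter : ∀ k, ∀ y : EuclideanSpace ℝ (Fin n),
      ((⟪h' (x k), x (k+1) - x k⟫ + 1/(2*γ k) * ‖x (k+1) - x k‖^2 : ℝ) : EReal) + g (x (k+1))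
        ≤ ((⟪h' (x k), y - x k⟫ + 1/(2*γ k) * ‖y - x k‖^2 : ℝ) : EReal) + g y)
    (hbounded : ∃ R : ℝ, ∀ k, ‖x k‖ ≤ R) :
    ∃ xbar : EuclideanSpace ℝ (Fin n),
      (0 : EuclideanSpace ℝ (Fin n)) ∈ limSubdiff f xbar ∧
      Tendsto x atTop (𝓝 xbar) ∧
      ∃ M > (0:ℝ), ∃ q : ℝ, 0 < q ∧ q < 1 ∧
        ∀ᶠ k in atTop, ‖x k - xbar‖ ≤ M * q ^ k := by
  have hf' : f = fun z => (h z : EReal) + g z := funext hf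
  have hL' : (L.toNNReal : ℝ) = L := Real.coe_toNNReal L hL.le
  have hδ : 0 < 1 / (2 * γhi) - L / 2 := by
    have := (lt_div_iff₀ hL).1 hγhi
    rw [sub_pos, lt_div_iff₀ (by linarith [(hγ 0).1, (hγ 0).2])]
    linarith
  have hstep : ∀ k, IsProxGradStep (h' (x k)) g (γ k) (x k) (x (k + 1)) := hiter
  obtain ⟨z₀, hz₀⟩ := hgproper.2
  have hfin : ∀ k, g (x (k + 1)) ≠ ⊤ := fun k => (hstep k).ne_top hz₀.ne
  set y := fun k => x (k + 1)
  set φ := fun k => h (y k) + (g (y k)).toReal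
  have hφ : ∀ k, f (y k) = φ k := fun k => by
    rw [hf, EReal.coe_add, EReal.coe_toReal (hfin k) (hgproper.1 _)]
  have hdecr : ∀ k, φ (k + 1) + (1 / (2 * γhi) - L / 2) * ‖y (k + 1) - y k‖ ^ 2 ≤ φ k := fun k =>
    hL' ▸ (hstep (k + 1)).add_sq_le hgrad hlip hgproper.1 (hfin k) (hγlo.trans_le (hγ _).1) (hγ _).2
  have hsub := fun k => hf' ▸ (hstep (k + 1)).exists_mem_regSubdiff hgrad hlip hgproper.1
    (hfin (k + 1)) hγlo (hγ _).1
  obtain ⟨R, hR⟩ := hbounded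
  obtain ⟨xbar, -, ψ, hψ, hyψ⟩ := tendsto_subseq_of_bounded (isBounded_closedBall (x := 0) (r := R))
    (fun k => mem_closedBall_zero_iff.2 (hR (k + 1)) : ∀ k, y k ∈ closedBall 0 R)
  have hcont : Continuous h := Differentiable.continuous fun z => (hgrad z).differentiableAt
  obtain ⟨ℓ, hφℓ, hle⟩ := exists_tendsto_of_antitone_of_lowerSemicontinuousAt hφ
    (antitone_of_sufficient_decrease hδ.le hdecr)
    (hf' ▸ lowerSemicontinuous_coe_add hcont hgclosed xbar)
    (hf xbar ▸ EReal.add_ne_bot_iff.2 ⟨EReal.coe_ne_bot _, hgproper.1 xbar⟩) hψ.tendsto_atTop hyψ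
  have hℓ : f xbar = ℓ := le_antisymm hle <| hf xbar ▸ coe_le_of_tendsto_of_isProxGradStep
    (fun k => hstep (k + 1)) hγlo (fun k => (hγ _).1) hcont hlip.continuous hgproper.1
    (tendsto_sub_of_sufficient_decrease hδ hdecr hφℓ) hψ.tendsto_atTop hyψ hφℓ
  have h0 := zero_mem_limSubdiff_of_sufficient_decrease hδ hφ hdecr hsub hφℓ hℓ
    hψ.tendsto_atTop hyψ
  obtain ⟨hlim, M, hM, q, hq0, hq1, hbound⟩ := tendsto_and_le_geometric_of_KLAt_half hδ
    (add_pos_of_nonneg_of_pos (NNReal.coe_nonneg _) (inv_pos.2 hγlo)) hφ hdecr hsub hφℓ hℓ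
    hψ.tendsto_atTop hyψ (hKL xbar ⟨0, h0⟩)
  exact ⟨xbar, h0, (tendsto_add_atTop_iff_nat 1).1 hlim, M / q, by positivity, q, hq0, hq1,
    eventually_le_geometric_of_succ hq0 hbound⟩

/-- Local linear convergence of the proximal gradient method
under a KL exponent of `1/2`. -/
theorem stmt_17 {n : ℕ} (h : EuclideanSpace ℝ (Fin n) → ℝ)
    (h' : EuclideanSpace ℝ (Fin n) → EuclideanSpace ℝ (Fin n))
    (hgrad : ∀ x, HasGradientAt h (h' x) x)
    (L : ℝ) (hL : 0 < L) (hlip : LipschitzWith (Real.toNNReal L) h')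
    (g : EuclideanSpace ℝ (Fin n) → EReal)
    (hgproper : ProperFn g) (hgclosed : LowerSemicontinuous g)
    (f : EuclideanSpace ℝ (Fin n) → EReal) (hf : ∀ x, f x = ((h x : ℝ) : EReal) + g x)
    (B : ℝ) (hbdd_below : ∀ x, (B : EReal) ≤ f x)
    (hKL : IsKL f (1/2))
    (γ : ℕ → ℝ) (γlo γhi : ℝ) (hγlo : 0 < γlo) (hγhi : γhi < 1/L)
    (hγ : ∀ k, γlo ≤ γ k ∧ γ k ≤ γhi)
    (x : ℕ → EuclideanSpace ℝ (Fin n))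
    (hiter : ∀ k, ∀ y : EuclideanSpace ℝ (Fin n),
      ((⟪h' (x k), x (k+1) - x k⟫ + 1/(2*γ k) * ‖x (k+1) - x k‖^2 : ℝ) : EReal) + g (x (k+1))
        ≤ ((⟪h' (x k), y - x k⟫ + 1/(2*γ k) * ‖y - x k‖^2 : ℝ) : EReal) + g y)
    (hbounded : ∃ R : ℝ, ∀ k, ‖x k‖ ≤ R) :
    ∃ xbar : EuclideanSpace ℝ (Fin n),
      (0 : EuclideanSpace ℝ (Fin n)) ∈ limSubdiff f xbar ∧
      Tendsto x atTop (𝓝 xbar) ∧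
      ∃ M > (0:ℝ), ∃ q : ℝ, 0 < q ∧ q < 1 ∧
        ∀ᶠ k in atTop, ‖x k - xbar‖ ≤ M * q ^ k :=
  stmt_17_general h h' hgrad L hL hlip g hgproper hgclosed f hf hKL γ γlo γhi hγlo hγhi hγ x hiter
    hbounded

end
end

section
/- Let f := ℓ + P, where ℓ : ℝ^n → (−∞,∞] is a proper closed function with open domain that is continuously differentiable on dom ℓ, and P : ℝ^n → (−∞,∞] is a proper closed polyhedral function, with dom ℓ ∩ dom P ≠ ∅. Let K := {(x,s) ∈ ℝ^n × ℝ : s ≥ P(x)}. Then there exists C > 0 such that for every x ∈ dom f, ‖Proj_K[(x, P(x)) − (∇ℓ(x), 1)] − (x, P(x))‖ ≤ C‖prox_P(x − ∇ℓ(x)) − x‖. -/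
open Filter Topology Metric Set
open scoped RealInnerProductSpace

noncomputable section

variable {E : Type*} [NormedAddCommGroup E] [InnerProductSpace ℝ E]

/-!
Let `w = prox_P z` and let `(v, r)` be the nearest point of `epi P` to `(z, P x - 1)`. Then
`r = max (P v) (P x - 1)`, and `v` minimises `max (P y - P x + 1) 0 ^ 2 / 2 + ‖y - z‖ ^ 2 / 2`
over `dom P`, while `w` minimises `P y + ‖y - z‖ ^ 2 / 2`. Both objectives are convex plus
`‖· - z‖ ^ 2 / 2`, so each minimiser has quadratic growth with modulus `1 / 4`; evaluating each
growth inequality at the other minimiser and adding gives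
`‖v - w‖ ^ 2 ≤ 2 |P v - P w| |P w - P x|`. A polyhedral function is Lipschitz on its domain, with
constant `L` say, so `‖v - w‖ ≤ 2 L ^ 2 ‖w - x‖`, and `(v, r)` is within
`(1 + L) (1 + 2 L ^ 2) ‖w - x‖` of `(x, P x)`.
-/

-- Concavity of `u ↦ u - max (u - c) 0 ^ 2 / 2`, whose derivative `min 1 (c + 1 - u)` is at most
-- `|u - (c + 1)|` in absolute value.
lemma sub_sub_half_sq_max_le (s t c : ℝ) :
    s - t - (max (s - c) 0 ^ 2 - max (t - c) 0 ^ 2) / 2 ≤ |s - t| * |t - (c + 1)| := by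
  have hmin : |min 1 (c + 1 - t)| ≤ |t - (c + 1)| := by
    rw [abs_sub_comm]
    exact abs_le.2 ⟨le_min ((neg_nonpos.2 (abs_nonneg _)).trans zero_le_one) (neg_abs_le _),
      (min_le_right _ _).trans (le_abs_self _)⟩
  calc s - t - (max (s - c) 0 ^ 2 - max (t - c) 0 ^ 2) / 2
      ≤ (s - t) * min 1 (c + 1 - t) := by
        rcases le_total t c with ht | ht
        · rw [min_eq_left (by linarith : (1:ℝ) ≤ c + 1 - t), max_eq_right (sub_nonpos.2 ht)]
          rcases le_total s c with hs | hs
          · rw [max_eq_right (sub_nonpos.2 hs)]; linarith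
          · rw [max_eq_left (sub_nonneg.2 hs)]; nlinarith
        · rw [min_eq_right (by linarith : c + 1 - t ≤ 1), max_eq_left (sub_nonneg.2 ht)]
          rcases le_total s c with hs | hs
          · rw [max_eq_right (sub_nonpos.2 hs)]
            nlinarith [mul_nonneg (sub_nonneg.2 ht) (sub_nonneg.2 hs)]
          · rw [max_eq_left (sub_nonneg.2 hs)]; nlinarith [sq_nonneg (s - t)]
    _ ≤ |(s - t) * min 1 (c + 1 - t)| := le_abs_self _
    _ ≤ |s - t| * |t - (c + 1)| := by
        rw [abs_mul]; exact mul_le_mul_of_nonneg_left hmin (abs_nonneg _)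

lemma abs_max_sub_one_sub_le (s p : ℝ) : |max s (p - 1) - p| ≤ |s - p| := by
  rcases le_total s (p - 1) with h | h
  · rw [max_eq_right h, abs_of_neg (by linarith), abs_of_neg (by linarith)]; linarith
  · rw [max_eq_left h]

lemma coe_toReal_of_mem_edomain {α : Type*} {f : α → EReal} (hbot : ∀ x, f x ≠ ⊥) {x : α}
    (hx : x ∈ edomain f) : ((f x).toReal : EReal) = f x :=
  EReal.coe_toReal hx.ne (hbot x)

lemma toReal_le_of_le_coe {α : Type*} {f : α → EReal} (hbot : ∀ x, f x ≠ ⊥) {x : α} {t : ℝ}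
    (h : f x ≤ t) : (f x).toReal ≤ t := by
  simpa using EReal.toReal_le_toReal h (hbot x) (EReal.coe_ne_top t)

lemma le_coe_of_toReal_le {α : Type*} {f : α → EReal} (hbot : ∀ x, f x ≠ ⊥) {x : α}
    (hx : x ∈ edomain f) {t : ℝ} (h : (f x).toReal ≤ t) : f x ≤ t :=
  (coe_toReal_of_mem_edomain hbot hx).symm.le.trans (EReal.coe_le_coe_iff.2 h)

lemma IsPolyhedralSet.convex {F : Type*} [AddCommGroup F] [Module ℝ F] {S : Set F}
    (hS : IsPolyhedralSet S) : Convex ℝ S := by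
  obtain ⟨k, φ, b, rfl⟩ := hS
  simp only [Set.ofPred_forall]
  exact convex_iInter fun i => convex_halfSpace_le (φ i).isLinear (b i)

lemma EConvex.convexOn_toReal {P : E → EReal} (hbot : ∀ x, P x ≠ ⊥) (hP : EConvex P) :
    ConvexOn ℝ (edomain P) (fun x => (P x).toReal) := by
  have key : ∀ ⦃a⦄, a ∈ edomain P → ∀ ⦃b⦄, b ∈ edomain P → ∀ ⦃θ η : ℝ⦄, 0 ≤ θ → 0 ≤ η →
      θ + η = 1 → P (θ • a + η • b) ≤ ((θ * (P a).toReal + η * (P b).toReal : ℝ) : EReal) :=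
    fun a ha b hb θ η hθ hη hθη => by
      simpa using hP (x := (a, (P a).toReal)) (y := (b, (P b).toReal))
        (coe_toReal_of_mem_edomain hbot ha).ge (coe_toReal_of_mem_edomain hbot hb).ge hθ hη hθη
  exact ⟨fun a ha b hb θ η hθ hη hθη => (key ha hb hθ hη hθη).trans_lt (EReal.coe_lt_top _),
    fun a ha b hb θ η hθ hη hθη => toReal_le_of_le_coe hbot (key ha hb hθ hη hθη)⟩

lemma slope_nonpos_of_epigraph_eq {F : Type*} [AddCommGroup F] [Module ℝ F] {P : F → EReal}
    {k : ℕ} {φ : Fin k → F × ℝ →ₗ[ℝ] ℝ} {b : Fin k → ℝ} (hbot : ∀ x, P x ≠ ⊥)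
    (hepi : ∀ y (t : ℝ), P y ≤ t ↔ ∀ i, φ i (y, t) ≤ b i)
    {y : F} (hy : y ∈ edomain P) (i : Fin k) : φ i (0, 1) ≤ 0 := by
  by_contra! hc
  set t₀ := (P y).toReal
  have hshift : ∀ s : ℝ, φ i (y, t₀ + s) = φ i (y, t₀) + s * φ i (0, 1) := fun s => by
    rw [← smul_eq_mul, ← map_smul, ← map_add]; simp
  have h₀ := (hepi y t₀).1 (coe_toReal_of_mem_edomain hbot hy).ge i
  -- raising the epigraph point `(y, t₀)` by `s` pushes `φ i` one past its bound `b i`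
  set s := (b i - φ i (y, t₀) + 1) / φ i (0, 1)
  have hs : 0 ≤ s := div_nonneg (by linarith) hc.le
  have h₁ := (hepi y (t₀ + s)).1 (le_coe_of_toReal_le hbot hy (by linarith)) i
  rw [hshift, div_mul_cancel₀ _ hc.ne'] at h₁
  linarith

lemma lipschitzOnWith_toReal_of_epigraph_eq {F : Type*} [NormedAddCommGroup F]
    [NormedSpace ℝ F] [FiniteDimensional ℝ F] {P : F → EReal} {k : ℕ}
    (φ : Fin k → F × ℝ →ₗ[ℝ] ℝ) (b : Fin k → ℝ) (hbot : ∀ x, P x ≠ ⊥)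
    (hepi : ∀ y (t : ℝ), P y ≤ t ↔ ∀ i, φ i (y, t) ≤ b i) :
    ∃ L, LipschitzOnWith L (fun x => (P x).toReal) (edomain P) := by
  set ℓ : Fin k → F →L[ℝ] ℝ := fun i =>
    LinearMap.toContinuousLinearMap ((φ i).comp (LinearMap.inl ℝ F ℝ))
  set c : Fin k → ℝ := fun i => φ i (0, 1)
  have hsplit : ∀ i y t, φ i (y, t) = ℓ i y + t * c i := fun i y t => by
    rw [show (y, t) = (y, 0) + t • ((0 : F), (1 : ℝ)) by simp, map_add, map_smul, smul_eq_mul]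
    rfl
  -- A constraint with `c i < 0` bounds the slope of `P` by `‖ℓ i‖ / |c i|`; one with `c i = 0`
  -- only constrains `dom P`.
  set L := ∑ i, ‖ℓ i‖ / |c i|
  refine ⟨_, LipschitzOnWith.of_le_add_mul' L fun a ha a' ha' => ?_⟩
  refine toReal_le_of_le_coe hbot ((hepi _ _).2 fun i => ?_)
  have h := (hepi a' _).1 (coe_toReal_of_mem_edomain hbot ha').ge i
  rw [hsplit] at h ⊢
  rcases (slope_nonpos_of_epigraph_eq hbot hepi ha i).lt_or_eq with hc | hc
  · have hℓ : ℓ i a ≤ ℓ i a' + ‖ℓ i‖ * dist a a' := by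
      have := (le_abs_self _).trans ((ℓ i).le_opNorm (a - a'))
      rw [map_sub] at this
      rw [dist_eq_norm]; linarith
    have hL : ‖ℓ i‖ ≤ L * -c i := by
      rw [← abs_of_neg hc]
      calc ‖ℓ i‖ = ‖ℓ i‖ / |c i| * |c i| := (div_mul_cancel₀ _ (abs_pos.2 hc.ne).ne').symm
        _ ≤ L * |c i| := by
          gcongr
          exact Finset.single_le_sum (f := fun j => ‖ℓ j‖ / |c j|)
            (fun j _ => by positivity) (Finset.mem_univ i)
    nlinarith [dist_nonneg (x := a) (y := a')]
  · have := (hepi a _).1 (coe_toReal_of_mem_edomain hbot ha).ge i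
    rw [hsplit, show c i = 0 from hc] at this
    rw [show c i = 0 from hc]
    linarith

lemma IsPolyhedralFn.exists_lipschitzOnWith [FiniteDimensional ℝ E] {P : E → EReal}
    (hP : IsPolyhedralFn P) : ∃ L, LipschitzOnWith L (fun x => (P x).toReal) (edomain P) := by
  obtain ⟨⟨hbot, -⟩, -, k, φ, b, hS⟩ := hP
  exact lipschitzOnWith_toReal_of_epigraph_eq φ b hbot fun y t => Set.ext_iff.1 hS (y, t)

lemma IsMinOn.add_norm_sub_sq_div_four_le {S : Set E} {φ : E → ℝ} (hφ : ConvexOn ℝ S φ)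
    {z m : E} (hm : m ∈ S) (hmin : IsMinOn (fun y => φ y + ‖y - z‖ ^ 2 / 2) S m)
    {y : E} (hy : y ∈ S) :
    φ m + ‖m - z‖ ^ 2 / 2 + ‖y - m‖ ^ 2 / 4 ≤ φ y + ‖y - z‖ ^ 2 / 2 := by
  have hmid_mem : (1 / 2 : ℝ) • m + (1 / 2 : ℝ) • y ∈ S :=
    hφ.1 hm hy (by norm_num) (by norm_num) (by norm_num)
  have hmid_le := hφ.2 hm hy (by norm_num : (0 : ℝ) ≤ 1 / 2) (by norm_num : (0 : ℝ) ≤ 1 / 2)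
    (by norm_num)
  have hpar := parallelogram_law_with_norm ℝ (m - z) (y - z)
  have hmid_norm : ‖(1 / 2 : ℝ) • m + (1 / 2 : ℝ) • y - z‖ = ‖m - z + (y - z)‖ / 2 := by
    rw [show (1 / 2 : ℝ) • m + (1 / 2 : ℝ) • y - z = (1 / 2 : ℝ) • (m - z + (y - z)) by module,
      norm_smul]
    norm_num; ring
  rw [show m - z - (y - z) = -(y - m) by abel, norm_neg] at hpar
  have := isMinOn_iff.1 hmin _ hmid_mem
  rw [hmid_norm] at this
  simp only [smul_eq_mul] at hmid_le
  nlinarith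

lemma ConvexOn.max_sub_sq_div_two {F : Type*} [AddCommGroup F] [Module ℝ F] {S : Set F}
    {φ : F → ℝ} (hφ : ConvexOn ℝ S φ) (c : ℝ) :
    ConvexOn ℝ S (fun y => max (φ y - c) 0 ^ 2 / 2) := by
  have h := ((hφ.add_const (-c)).sup (convexOn_const (0 : ℝ) hφ.1)).pow
    (fun y _ => le_max_right _ _) 2
  simpa [sub_eq_add_neg, div_eq_mul_inv, mul_comm] using h.smul (by norm_num : (0:ℝ) ≤ 1 / 2)

lemma WithLp.prod_norm_le_add_of_L2 {α β : Type*} [SeminormedAddCommGroup α]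
    [SeminormedAddCommGroup β] (q : WithLp 2 (α × β)) : ‖q‖ ≤ ‖q.fst‖ + ‖q.snd‖ := by
  rw [WithLp.prod_norm_eq_of_L2, Real.sqrt_le_iff]
  exact ⟨by positivity, by nlinarith [norm_nonneg q.fst, norm_nonneg q.snd]⟩

def epigraphL2 (P : E → EReal) : Set (WithLp 2 (E × ℝ)) :=
  {q | P (WithLp.equiv 2 (E × ℝ) q).1 ≤ ((WithLp.equiv 2 (E × ℝ) q).2 : EReal)}

section ProxAndProjection

variable {F : Type*} [NormedAddCommGroup F] {P : F → EReal}

lemma IsProxPt.mem_edomain (hP : ProperFn P) {z w : F} (hw : IsProxPt P z w) :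
    w ∈ edomain P := by
  obtain ⟨x, hx⟩ := hP.2
  have h := (hw x).trans_lt (EReal.add_lt_top hx.ne (EReal.coe_ne_top _))
  exact ((EReal.add_ne_top_iff_ne_top_left (EReal.coe_ne_bot _) (EReal.coe_ne_top _)).1
    h.ne).lt_top

lemma IsProxPt.isMinOn (hbot : ∀ x, P x ≠ ⊥) {z w : F} (hw : IsProxPt P z w)
    (hwP : w ∈ edomain P) :
    IsMinOn (fun y => (P y).toReal + ‖y - z‖ ^ 2 / 2) (edomain P) w :=
  isMinOn_iff.2 fun y hy => by
    have h := hw y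
    rw [← coe_toReal_of_mem_edomain hbot hwP, ← coe_toReal_of_mem_edomain hbot hy,
      ← EReal.coe_add, ← EReal.coe_add, EReal.coe_le_coe_iff] at h
    linarith

lemma sq_add_sq_le_of_nearest_epigraphL2 {z : F} {c : ℝ} {pr : WithLp 2 (F × ℝ)}
    (hpr : ∀ q ∈ epigraphL2 P, dist ((WithLp.equiv 2 (F × ℝ)).symm (z, c)) pr
      ≤ dist ((WithLp.equiv 2 (F × ℝ)).symm (z, c)) q)
    {y : F} {t : ℝ} (hyt : P y ≤ t) :
    ‖pr.fst - z‖ ^ 2 + (pr.snd - c) ^ 2 ≤ ‖y - z‖ ^ 2 + (t - c) ^ 2 := by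
  have h := hpr ((WithLp.equiv 2 (F × ℝ)).symm (y, t)) (by simpa [epigraphL2] using hyt)
  rw [dist_comm, dist_comm _ ((WithLp.equiv 2 (F × ℝ)).symm (y, t)), dist_eq_norm,
    dist_eq_norm] at h
  simpa [WithLp.prod_norm_sq_eq_of_L2, sq_abs] using pow_le_pow_left₀ (norm_nonneg _) h 2

lemma eq_max_of_nearest (hbot : ∀ x, P x ≠ ⊥) {z v : F} {r c : ℝ} (hv : P v ≤ r)
    (hmin : ∀ y (t : ℝ), P y ≤ t → ‖v - z‖ ^ 2 + (r - c) ^ 2 ≤ ‖y - z‖ ^ 2 + (t - c) ^ 2) :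
    r = max (P v).toReal c := by
  have hvP : v ∈ edomain P := hv.trans_lt (EReal.coe_lt_top r)
  have hsr := toReal_le_of_le_coe hbot hv
  have h := hmin v _ (le_coe_of_toReal_le hbot hvP (le_max_left _ c))
  rcases le_total (P v).toReal c with h' | h'
  · rw [max_eq_right h'] at h ⊢; nlinarith
  · rw [max_eq_left h'] at h ⊢; nlinarith

lemma isMinOn_of_nearest (hbot : ∀ x, P x ≠ ⊥) {z v : F} {r c : ℝ} (hv : P v ≤ r)
    (hmin : ∀ y (t : ℝ), P y ≤ t → ‖v - z‖ ^ 2 + (r - c) ^ 2 ≤ ‖y - z‖ ^ 2 + (t - c) ^ 2) :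
    IsMinOn (fun y => max ((P y).toReal - c) 0 ^ 2 / 2 + ‖y - z‖ ^ 2 / 2) (edomain P) v :=
  isMinOn_iff.2 fun y hy => by
    have hmax : ∀ s : ℝ, max s c - c = max (s - c) 0 := fun s => by
      rw [← max_sub_sub_right, sub_self]
    have h := hmin y _ (le_coe_of_toReal_le hbot hy (le_max_left _ c))
    rw [eq_max_of_nearest hbot hv hmin, hmax, hmax] at h
    linarith

end ProxAndProjection

section Comparison

variable {P : E → EReal}

lemma norm_sub_sq_le_of_isMinOn (hconv : ConvexOn ℝ (edomain P) (fun y => (P y).toReal))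
    {z w v : E} {c : ℝ} (hw : w ∈ edomain P)
    (hwmin : IsMinOn (fun y => (P y).toReal + ‖y - z‖ ^ 2 / 2) (edomain P) w)
    (hv : v ∈ edomain P)
    (hvmin : IsMinOn (fun y => max ((P y).toReal - c) 0 ^ 2 / 2 + ‖y - z‖ ^ 2 / 2) (edomain P) v) :
    ‖v - w‖ ^ 2 ≤ 2 * (|(P v).toReal - (P w).toReal| * |(P w).toReal - (c + 1)|) := by
  have hw_growth := IsMinOn.add_norm_sub_sq_div_four_le hconv hw hwmin hv
  have hv_growth :=
    IsMinOn.add_norm_sub_sq_div_four_le (hconv.max_sub_sq_div_two c) hv hvmin hw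
  have hkey := sub_sub_half_sq_max_le (P v).toReal (P w).toReal c
  rw [norm_sub_rev w v] at hv_growth
  linarith

theorem IsPolyhedralFn.exists_norm_nearest_epigraphL2_sub_le [FiniteDimensional ℝ E]
    (hP : IsPolyhedralFn P) :
    ∃ C > (0 : ℝ), ∀ x ∈ edomain P, ∀ z w : E, IsProxPt P z w →
      ∀ pr ∈ epigraphL2 P,
        (∀ q ∈ epigraphL2 P, dist ((WithLp.equiv 2 (E × ℝ)).symm (z, (P x).toReal - 1)) pr
          ≤ dist ((WithLp.equiv 2 (E × ℝ)).symm (z, (P x).toReal - 1)) q) →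
        ‖pr - (WithLp.equiv 2 (E × ℝ)).symm (x, (P x).toReal)‖ ≤ C * ‖w - x‖ := by
  have hbot := hP.1.1
  have hconv := EConvex.convexOn_toReal hbot hP.2.2.convex
  obtain ⟨L, hL⟩ := hP.exists_lipschitzOnWith
  have hLip : ∀ a ∈ edomain P, ∀ b ∈ edomain P,
      |(P a).toReal - (P b).toReal| ≤ L * ‖a - b‖ := fun a ha b hb => by
    simpa [Real.dist_eq, dist_eq_norm] using hL.dist_le_mul a ha b hb
  refine ⟨(1 + L) * (1 + 2 * L ^ 2), by positivity, fun x hx z w hw pr hpr hnear => ?_⟩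
  set v := pr.fst
  set p := (P x).toReal
  have hmin := fun y (t : ℝ) (hyt : P y ≤ t) => sq_add_sq_le_of_nearest_epigraphL2 hnear hyt
  have hprK : P v ≤ pr.snd := hpr
  have hvP : v ∈ edomain P := hprK.trans_lt (EReal.coe_lt_top _)
  have hwP := hw.mem_edomain hP.1
  have hvw_sq := norm_sub_sq_le_of_isMinOn hconv hwP (hw.isMinOn hbot hwP) hvP
    (isMinOn_of_nearest hbot hprK hmin)
  rw [sub_add_cancel] at hvw_sq
  have hvw : ‖v - w‖ ≤ 2 * L ^ 2 * ‖w - x‖ := by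
    have hprod : |(P v).toReal - (P w).toReal| * |(P w).toReal - p|
        ≤ L * ‖v - w‖ * (L * ‖w - x‖) :=
      mul_le_mul (hLip v hvP w hwP) (hLip w hwP x hx) (abs_nonneg _) (by positivity)
    by_contra! hlt
    have hpos : 0 < ‖v - w‖ := lt_of_le_of_lt (by positivity) hlt
    nlinarith [mul_lt_mul_of_pos_right hlt hpos]
  have hvx : ‖v - x‖ ≤ (1 + 2 * L ^ 2) * ‖w - x‖ := by
    have := norm_sub_le_norm_sub_add_norm_sub v w x
    linarith
  have hsnd : |pr.snd - p| ≤ L * ‖v - x‖ := by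
    rw [eq_max_of_nearest hbot hprK hmin]
    exact (abs_max_sub_one_sub_le _ p).trans (hLip v hvP x hx)
  calc ‖pr - (WithLp.equiv 2 (E × ℝ)).symm (x, p)‖ ≤ ‖v - x‖ + |pr.snd - p| := by
        simpa using WithLp.prod_norm_le_add_of_L2 (pr - (WithLp.equiv 2 (E × ℝ)).symm (x, p))
    _ ≤ (1 + L) * ‖v - x‖ := by linarith
    _ ≤ (1 + L) * ((1 + 2 * L ^ 2) * ‖w - x‖) := by gcongr
    _ = (1 + L) * (1 + 2 * L ^ 2) * ‖w - x‖ := by ring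

end Comparison

theorem stmt_19_general {n : ℕ} (l : EuclideanSpace ℝ (Fin n) → EReal)
    (hlproper : ProperFn l)
    (l' : EuclideanSpace ℝ (Fin n) → EuclideanSpace ℝ (Fin n))
    (P : EuclideanSpace ℝ (Fin n) → EReal) (hP : IsPolyhedralFn P)
    (f : EuclideanSpace ℝ (Fin n) → EReal) (hf : ∀ x, f x = l x + P x)
    (K : Set (WithLp 2 (EuclideanSpace ℝ (Fin n) × ℝ)))
    (hK : K = {p | P (WithLp.equiv 2 (EuclideanSpace ℝ (Fin n) × ℝ) p).1
      ≤ (((WithLp.equiv 2 (EuclideanSpace ℝ (Fin n) × ℝ) p).2 : ℝ) : EReal)}) :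
    ∃ C > (0:ℝ), ∀ x ∈ edomain f, ∀ w : EuclideanSpace ℝ (Fin n),
      IsProxPt P (x - l' x) w →
      ∀ pr : WithLp 2 (EuclideanSpace ℝ (Fin n) × ℝ), pr ∈ K →
        (∀ s ∈ K, dist ((WithLp.equiv 2 (EuclideanSpace ℝ (Fin n) × ℝ)).symm
            (x - l' x, (P x).toReal - 1)) pr
          ≤ dist ((WithLp.equiv 2 (EuclideanSpace ℝ (Fin n) × ℝ)).symm
            (x - l' x, (P x).toReal - 1)) s) →
        ‖pr - (WithLp.equiv 2 (EuclideanSpace ℝ (Fin n) × ℝ)).symm (x, (P x).toReal)‖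
          ≤ C * ‖w - x‖ := by
  obtain ⟨C, hC, hbound⟩ := hP.exists_norm_nearest_epigraphL2_sub_le
  refine ⟨C, hC, fun x hx w hw pr hpr hnear => ?_⟩
  have hxP : x ∈ edomain P := by
    have hfx : l x + P x ≠ ⊤ := hf x ▸ hx.ne
    exact ((EReal.add_ne_top_iff_ne_top₂ (hlproper.1 x) (hP.1.1 x)).1 hfx).2.lt_top
  subst hK
  exact hbound x hxP _ w hw pr hpr hnear

/-- comparison between the projected gradient step on the epigraph of `P`
and the proximal gradient step. -/
theorem stmt_19 {n : ℕ} (l : EuclideanSpace ℝ (Fin n) → EReal)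
    (hlproper : ProperFn l) (hlclosed : LowerSemicontinuous l)
    (hopen : IsOpen (edomain l))
    (l' : EuclideanSpace ℝ (Fin n) → EuclideanSpace ℝ (Fin n))
    (hgrad : ∀ x ∈ edomain l, HasGradientAt (fun y => (l y).toReal) (l' x) x)
    (hgradcont : ContinuousOn l' (edomain l))
    (P : EuclideanSpace ℝ (Fin n) → EReal) (hP : IsPolyhedralFn P)
    (hcap : (edomain l ∩ edomain P).Nonempty)
    (f : EuclideanSpace ℝ (Fin n) → EReal) (hf : ∀ x, f x = l x + P x)
    (K : Set (WithLp 2 (EuclideanSpace ℝ (Fin n) × ℝ)))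
    (hK : K = {p | P (WithLp.equiv 2 (EuclideanSpace ℝ (Fin n) × ℝ) p).1
      ≤ (((WithLp.equiv 2 (EuclideanSpace ℝ (Fin n) × ℝ) p).2 : ℝ) : EReal)}) :
    ∃ C > (0:ℝ), ∀ x ∈ edomain f, ∀ w : EuclideanSpace ℝ (Fin n),
      IsProxPt P (x - l' x) w →
      ∀ pr : WithLp 2 (EuclideanSpace ℝ (Fin n) × ℝ), pr ∈ K →
        (∀ s ∈ K, dist ((WithLp.equiv 2 (EuclideanSpace ℝ (Fin n) × ℝ)).symm
            (x - l' x, (P x).toReal - 1)) pr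
          ≤ dist ((WithLp.equiv 2 (EuclideanSpace ℝ (Fin n) × ℝ)).symm
            (x - l' x, (P x).toReal - 1)) s) →
        ‖pr - (WithLp.equiv 2 (EuclideanSpace ℝ (Fin n) × ℝ)).symm (x, (P x).toReal)‖
          ≤ C * ‖w - x‖ :=
  stmt_19_general l hlproper l' P hP f hf K hK

end
end
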